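/- arXiv:math/0506299 — 11 statements merged into one kernel-verified Lean document; each statement's English description precedes it below -/
import Mathlib

section
/- Let k be a commutative ring, R a commutative k-algebra, and L a Lie algebra over k which is also an R-module. Suppose ρ : L → Der_k(R) is a k-linear map into the k-linear derivations of R satisfying the Leibniz rule ⁅X, f • Y⁆ = f • ⁅X, Y⁆ + (ρ(X) f) • Y for all X, Y ∈ L and f ∈ R, and suppose the R-module L is faithful (i.e. if f • Z = 0 for all Z ∈ L then f = 0). Then ρ preserves brackets: ρ(⁅X, Y⁆) = ρ(X) ∘ ρ(Y) − ρ(Y) ∘ ρ(X) (the commutator bracket of derivations) for all X, Y ∈ L; that is, the anchor of a Lie algebroid-type structure is a Lie algebra homomorphism into derivations. -/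
/-! Expanding both sides of the Jacobi identity
`⁅⁅X, Y⁆, f • Z⁆ = ⁅X, ⁅Y, f • Z⁆⁆ - ⁅Y, ⁅X, f • Z⁆⁆` with the Leibniz rule, every term cancels
except `(ρ ⁅X, Y⁆ f - (ρ X (ρ Y f) - ρ Y (ρ X f))) • Z`, which therefore vanishes for every `Z`;
faithfulness of `L` over `R` then kills the coefficient. -/

theorem anchor_lie_sub_commutator_smul_eq_zero {R L : Type*} [CommRing R] [LieRing L]
    [Module R L] {ρ : L → R → R}
    (hLeib : ∀ (X Y : L) (f : R), ⁅X, f • Y⁆ = f • ⁅X, Y⁆ + ρ X f • Y)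
    (X Y Z : L) (f : R) : (ρ ⁅X, Y⁆ f - (ρ X (ρ Y f) - ρ Y (ρ X f))) • Z = 0 := by
  have jacobi : ⁅⁅X, Y⁆, f • Z⁆ = ⁅X, ⁅Y, f • Z⁆⁆ - ⁅Y, ⁅X, f • Z⁆⁆ := lie_lie _ _ _
  simp only [hLeib, lie_add] at jacobi
  rw [lie_lie] at jacobi
  linear_combination (norm := module) jacobi

/-- The anchor of a Lie algebroid-type structure is a Lie algebra homomorphism
into derivations: if `ρ : L → Der_k(R)` satisfies the Leibniz rule and the
`R`-module `L` is faithful, then `ρ` preserves brackets (with the commutator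
bracket of derivations). -/
theorem anchor_is_lie_hom (k R L : Type*) [CommRing k] [CommRing R] [Algebra k R]
    [LieRing L] [LieAlgebra k L] [Module R L]
    (ρ : L →ₗ[k] Derivation k R R)
    (hLeib : ∀ (X Y : L) (f : R), ⁅X, f • Y⁆ = f • ⁅X, Y⁆ + (ρ X f) • Y)
    (hfaith : ∀ f : R, (∀ Z : L, f • Z = 0) → f = 0) :
    ∀ (X Y : L) (f : R), ρ ⁅X, Y⁆ f = ρ X (ρ Y f) - ρ Y (ρ X f) := by
  intro X Y f
  rw [← sub_eq_zero]
  exact hfaith _ fun Z =>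
    anchor_lie_sub_commutator_smul_eq_zero (ρ := fun X f => ρ X f) hLeib X Y Z f
end

section
/- Let E be a real normed vector space, L : E × E → ℝ Fréchet differentiable, N ≥ 2 a natural number, and x₀, x_N ∈ E fixed. Define the discrete action sum S : E^{N−1} → ℝ by S(x₁, …, x_{N−1}) = Σ_{k=0}^{N−1} L(x_k, x_{k+1}). Then the Fréchet derivative of S at (x₁, …, x_{N−1}) vanishes if and only if the discrete Euler–Lagrange equations hold: D₂L(x_{k−1}, x_k) + D₁L(x_k, x_{k+1}) = 0 for every k = 1, …, N−1. (Variational characterization of solutions: admissible sequences with fixed endpoints are critical points of the action sum iff they satisfy the discrete Euler–Lagrange equations.) -/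
open scoped BigOperators

variable {E : Type*} [NormedAddCommGroup E] [NormedSpace ℝ E]

/-- The Fréchet derivative of `z ↦ L (z, y)` at `x`. -/
noncomputable def D1 (L : E × E → ℝ) (x y : E) : E →L[ℝ] ℝ :=
  fderiv ℝ (fun z => L (z, y)) x

/-- The Fréchet derivative of `z ↦ L (x, z)` at `y`. -/
noncomputable def D2 (L : E × E → ℝ) (x y : E) : E →L[ℝ] ℝ :=
  fderiv ℝ (fun z => L (x, z)) y

/-- The sequence `x₀, x₁, …, x_{N−1}, x_N` obtained from the interior points
`u = (x₁, …, x_{N−1})` and the fixed endpoints `x₀` and `x_N`. -/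
def extSeq (N : ℕ) (x0 xN : E) (u : Fin (N - 1) → E) : ℕ → E := fun k =>
  if hk : 0 < k ∧ k < N then u ⟨k - 1, by omega⟩ else if k = 0 then x0 else xN

/-- Variational characterization of solutions on the pair groupoid: a sequence with
fixed endpoints is a critical point of the discrete action sum if and only if the
discrete Euler–Lagrange equations `D₂L(x_{k−1},x_k) + D₁L(x_k,x_{k+1}) = 0`,
`1 ≤ k ≤ N−1`, hold. -/
theorem fderiv_actionSum_eq_zero_iff_discreteEulerLagrange
    (L : E × E → ℝ) (hL : Differentiable ℝ L) (N : ℕ) (hN : 2 ≤ N)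
    (x0 xN : E) (u : Fin (N - 1) → E) :
    fderiv ℝ
        (fun w : Fin (N - 1) → E =>
          ∑ k ∈ Finset.range N, L (extSeq N x0 xN w k, extSeq N x0 xN w (k + 1))) u = 0
      ↔
    ∀ k : ℕ, 1 ≤ k → k ≤ N - 1 →
      D2 L (extSeq N x0 xN u (k - 1)) (extSeq N x0 xN u k)
        + D1 L (extSeq N x0 xN u k) (extSeq N x0 xN u (k + 1)) = 0 := by
  obtain ⟨m, rfl⟩ : ∃ m, N = m + 1 := ⟨N - 1, by omega⟩
  have hm : 1 ≤ m := by omega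
  set xs : ℕ → E := extSeq (m + 1) x0 xN u with hxs
  -- the derivative of the coordinate maps
  have hCdef : ∀ k : ℕ, ∃ C : (Fin (m + 1 - 1) → E) →L[ℝ] E,
      (∀ w, HasFDerivAt (fun w : Fin (m + 1 - 1) → E => extSeq (m + 1) x0 xN w k) C w) ∧
      (∀ v : Fin (m + 1 - 1) → E, C v = extSeq (m + 1) 0 0 v k) := by
    intro k
    by_cases hk : 0 < k ∧ k < m + 1
    · refine ⟨ContinuousLinearMap.proj ⟨k - 1, by omega⟩, fun w => ?_, fun v => ?_⟩
      · have : (fun w : Fin (m + 1 - 1) → E => extSeq (m + 1) x0 xN w k)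
            = fun w => w ⟨k - 1, by omega⟩ := by
          funext w; simp [extSeq, hk]
        rw [this]
        exact (ContinuousLinearMap.proj (R := ℝ) (φ := fun _ : Fin (m + 1 - 1) => E)
          ⟨k - 1, by omega⟩).hasFDerivAt
      · simp [extSeq, hk]
    · refine ⟨0, fun w => ?_, fun v => ?_⟩
      · have : (fun w : Fin (m + 1 - 1) → E => extSeq (m + 1) x0 xN w k)
            = fun _ => (if k = 0 then x0 else xN) := by
          funext w; simp only [extSeq]; rw [dif_neg hk]
        rw [this]; exact hasFDerivAt_const _ _
      · simp only [extSeq]; rw [dif_neg hk]; simp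
  choose C hC hCv using hCdef
  -- splitting the derivative of L
  have hsplit : ∀ x y a b : E,
      fderiv ℝ L (x, y) (a, b) = D1 L x y a + D2 L x y b := by
    intro x y a b
    have h1 : D1 L x y = (fderiv ℝ L (x, y)).comp (ContinuousLinearMap.inl ℝ E E) :=
      ((hL (x, y)).hasFDerivAt.comp x (hasFDerivAt_prodMk_left x y)).fderiv
    have h2 : D2 L x y = (fderiv ℝ L (x, y)).comp (ContinuousLinearMap.inr ℝ E E) :=
      ((hL (x, y)).hasFDerivAt.comp y (hasFDerivAt_prodMk_right x y)).fderiv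
    have : (a, b) = ((a, 0) : E × E) + (0, b) := by simp
    rw [h1, h2, this, map_add]
    simp
  -- derivative of the action sum
  have hS : HasFDerivAt
      (fun w : Fin (m + 1 - 1) → E =>
        ∑ k ∈ Finset.range (m + 1), L (extSeq (m + 1) x0 xN w k, extSeq (m + 1) x0 xN w (k + 1)))
      (∑ k ∈ Finset.range (m + 1),
        (fderiv ℝ L (xs k, xs (k + 1))).comp ((C k).prod (C (k + 1)))) u := by
    apply HasFDerivAt.fun_sum
    intro k _
    exact (hL (xs k, xs (k + 1))).hasFDerivAt.comp u (HasFDerivAt.prodMk (hC k u) (hC (k + 1) u))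
  -- the key evaluation formula
  have key : ∀ v : Fin (m + 1 - 1) → E,
      fderiv ℝ
        (fun w : Fin (m + 1 - 1) → E =>
          ∑ k ∈ Finset.range (m + 1), L (extSeq (m + 1) x0 xN w k, extSeq (m + 1) x0 xN w (k + 1)))
        u v
      = ∑ i ∈ Finset.range m,
          (D2 L (xs i) (xs (i + 1)) + D1 L (xs (i + 1)) (xs (i + 2)))
            (extSeq (m + 1) 0 0 v (i + 1)) := by
    intro v
    rw [hS.fderiv]
    rw [ContinuousLinearMap.sum_apply]
    have step : ∀ k ∈ Finset.range (m + 1),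
        ((fderiv ℝ L (xs k, xs (k + 1))).comp ((C k).prod (C (k + 1)))) v
        = D1 L (xs k) (xs (k + 1)) (extSeq (m + 1) 0 0 v k)
          + D2 L (xs k) (xs (k + 1)) (extSeq (m + 1) 0 0 v (k + 1)) := by
      intro k _
      rw [ContinuousLinearMap.comp_apply, ContinuousLinearMap.prod_apply, hCv, hCv, hsplit]
    rw [Finset.sum_congr rfl step, Finset.sum_add_distrib]
    have e0 : extSeq (m + 1) 0 0 v 0 = 0 := by simp [extSeq]
    have eN : extSeq (m + 1) 0 0 v (m + 1) = 0 := by simp [extSeq]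
    rw [Finset.sum_range_succ', Finset.sum_range_succ, e0, eN, map_zero, map_zero,
      add_zero, add_zero, ← Finset.sum_add_distrib]
    apply Finset.sum_congr rfl
    intro i _
    simp only [ContinuousLinearMap.add_apply]
    ring
  constructor
  · intro h k hk1 hk2
    ext e
    have hj : k - 1 < m + 1 - 1 := by omega
    have hv := key (Pi.single (⟨k - 1, hj⟩ : Fin (m + 1 - 1)) e)
    rw [h] at hv
    simp only [ContinuousLinearMap.zero_apply] at hv
    have hterm : ∀ i ∈ Finset.range m,
        (D2 L (xs i) (xs (i + 1)) + D1 L (xs (i + 1)) (xs (i + 2)))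
          (extSeq (m + 1) 0 0 (Pi.single (⟨k - 1, hj⟩ : Fin (m + 1 - 1)) e) (i + 1))
        = if i = k - 1 then
            (D2 L (xs i) (xs (i + 1)) + D1 L (xs (i + 1)) (xs (i + 2))) e else 0 := by
      intro i hi
      have hi' : i < m := Finset.mem_range.mp hi
      have : extSeq (m + 1) 0 0 (Pi.single (⟨k - 1, hj⟩ : Fin (m + 1 - 1)) e) (i + 1)
          = (Pi.single (⟨k - 1, hj⟩ : Fin (m + 1 - 1)) e : Fin (m + 1 - 1) → E) ⟨i, by omega⟩ := by
        simp [extSeq, hi']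
      rw [this, Pi.single_apply]
      by_cases hik : i = k - 1
      · simp [hik]
      · have : (⟨i, by omega⟩ : Fin (m + 1 - 1)) ≠ ⟨k - 1, hj⟩ := by
          simp [Fin.ext_iff]; omega
        simp [this, hik]
    rw [Finset.sum_congr rfl hterm, Finset.sum_ite_eq' (Finset.range m) (k - 1)] at hv
    have hmem : k - 1 ∈ Finset.range m := Finset.mem_range.mpr (by omega)
    rw [if_pos hmem] at hv
    have hk' : k - 1 + 1 = k := by omega
    rw [hk'] at hv
    have hk'' : k - 1 + 2 = k + 1 := by omega
    rw [hk''] at hv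
    simpa using hv.symm
  · intro h
    refine ContinuousLinearMap.ext fun v => ?_
    rw [key v]
    have : ∀ i ∈ Finset.range m,
        (D2 L (xs i) (xs (i + 1)) + D1 L (xs (i + 1)) (xs (i + 2)))
          (extSeq (m + 1) 0 0 v (i + 1)) = 0 := by
      intro i hi
      have hi' : i < m := Finset.mem_range.mp hi
      have := h (i + 1) (by omega) (by omega)
      simp only [Nat.add_sub_cancel] at this
      rw [show i + 2 = i + 1 + 1 from rfl] at *
      rw [this]
      simp
    rw [Finset.sum_congr rfl this]
    simp
end

section
/- Let E be a real normed vector space, L : E × E → ℝ Fréchet differentiable, and ξ : E × E → E × E a Fréchet differentiable second-order map (pr₁ ∘ ξ = pr₂). Then ξ is a discrete Lagrangian evolution operator for L (i.e. D₂L(p) + D₁L(ξ(p)) = 0 for all p) if and only if the pullback of the Poincaré–Cartan 1-form Θ⁻_L by ξ equals Θ⁺_L, i.e. for every p ∈ E×E and every w ∈ E×E one has Θ⁻_L(ξ(p))(Dξ(p)(w)) = Θ⁺_L(p)(w). -/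
variable {E : Type*} [NormedAddCommGroup E] [NormedSpace ℝ E]

/-- The discrete Poincaré–Cartan 1-form `Θ⁻_L(x,y)(u,v) = −D₁L(x,y)(u)`. -/
noncomputable def ThetaMinus (L : E × E → ℝ) (p w : E × E) : ℝ :=
  -(D1 L p.1 p.2 w.1)

/-- The discrete Poincaré–Cartan 1-form `Θ⁺_L(x,y)(u,v) = D₂L(x,y)(v)`. -/
noncomputable def ThetaPlus (L : E × E → ℝ) (p w : E × E) : ℝ :=
  D2 L p.1 p.2 w.2

/-! Differentiating `pr₁ ∘ ξ = pr₂` gives `pr₁ ∘ Dξ(p) = pr₂`, so the pullback identity at `(p, w)`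
says exactly that `D₂L(p) + D₁L(ξ p)` vanishes at `w.2`, which ranges over all of `E`. -/

section SecondOrder

variable {𝕜 : Type*} [NontriviallyNormedField 𝕜]
  {F G H : Type*} [NormedAddCommGroup F] [NormedSpace 𝕜 F] [NormedAddCommGroup G]
  [NormedSpace 𝕜 G] [NormedAddCommGroup H] [NormedSpace 𝕜 H]

theorem fst_fderiv_apply_eq_snd_of_fst_eq_snd {ξ : F × G → G × H} {p : F × G}
    (hso : ∀ q, (ξ q).1 = q.2) (hξ : DifferentiableAt 𝕜 ξ p) (w : F × G) :
    (fderiv 𝕜 ξ p w).1 = w.2 := by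
  have hfst : HasFDerivAt (fun q => (ξ q).1)
      ((ContinuousLinearMap.fst 𝕜 G H).comp (fderiv 𝕜 ξ p)) p :=
    hξ.hasFDerivAt.fst
  rw [funext hso] at hfst
  exact congrArg (· w) (hasFDerivAt_snd.unique hfst).symm

end SecondOrder

theorem thetaPlus_sub_thetaMinus_of_fst_eq_snd (L : E × E → ℝ) {p q u w : E × E}
    (huw : u.1 = w.2) :
    ThetaPlus L p w - ThetaMinus L q u = (D2 L p.1 p.2 + D1 L q.1 q.2) w.2 := by
  simp [ThetaPlus, ThetaMinus, huw]

theorem discreteEvolutionOperator_iff_pullback_thetaMinus_eq_thetaPlus_general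
    (L : E × E → ℝ)
    (ξ : E × E → E × E) (hξ : Differentiable ℝ ξ)
    (hso : ∀ p : E × E, (ξ p).1 = p.2) :
    (∀ p : E × E, D2 L p.1 p.2 + D1 L (ξ p).1 (ξ p).2 = 0)
      ↔
    (∀ p w : E × E, ThetaMinus L (ξ p) (fderiv ℝ ξ p w) = ThetaPlus L p w) := by
  have key (p w : E × E) :
      ThetaPlus L p w - ThetaMinus L (ξ p) (fderiv ℝ ξ p w)
        = (D2 L p.1 p.2 + D1 L (ξ p).1 (ξ p).2) w.2 :=
    thetaPlus_sub_thetaMinus_of_fst_eq_snd L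
      (fst_fderiv_apply_eq_snd_of_fst_eq_snd hso (hξ p) w)
  constructor
  · intro h p w
    rw [eq_comm, ← sub_eq_zero, key, h p, zero_apply]
  · intro h p
    ext v
    simpa [h p (0, v)] using (key p (0, v)).symm

/-- A second-order map `ξ` is a discrete Lagrangian evolution operator for `L`
if and only if the pullback of `Θ⁻_L` by `ξ` equals `Θ⁺_L`. -/
theorem discreteEvolutionOperator_iff_pullback_thetaMinus_eq_thetaPlus
    (L : E × E → ℝ) (hL : Differentiable ℝ L)
    (ξ : E × E → E × E) (hξ : Differentiable ℝ ξ)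
    (hso : ∀ p : E × E, (ξ p).1 = p.2) :
    (∀ p : E × E, D2 L p.1 p.2 + D1 L (ξ p).1 (ξ p).2 = 0)
      ↔
    (∀ p w : E × E, ThetaMinus L (ξ p) (fderiv ℝ ξ p w) = ThetaPlus L p w) :=
  discreteEvolutionOperator_iff_pullback_thetaMinus_eq_thetaPlus_general L ξ hξ hso
end

section
/- Let E be a real normed vector space, L : E × E → ℝ Fréchet differentiable, and ξ : E × E → E × E a Fréchet differentiable second-order map (pr₁ ∘ ξ = pr₂). Then ξ is a discrete Lagrangian evolution operator for L if and only if (ξ*Θ⁻_L) − Θ⁻_L = dL, i.e. for every p ∈ E×E and every w ∈ E×E one has Θ⁻_L(ξ(p))(Dξ(p)(w)) − Θ⁻_L(p)(w) = DL(p)(w), where DL(p) is the Fréchet derivative of L at p. -/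
variable {E : Type*} [NormedAddCommGroup E] [NormedSpace ℝ E]

theorem D1_eq (L : E × E → ℝ) (hL : Differentiable ℝ L) (x y : E) (u : E) :
    D1 L x y u = fderiv ℝ L (x, y) (u, 0) := by
  have h : HasFDerivAt (fun z => L (z, y))
      ((fderiv ℝ L ((x : E), y)).comp (ContinuousLinearMap.inl ℝ E E)) x :=
    (hL (x, y)).hasFDerivAt.comp x (HasFDerivAt.prodMk (hasFDerivAt_id x) (hasFDerivAt_const y x))
  rw [D1, h.fderiv]; rfl

theorem D2_eq (L : E × E → ℝ) (hL : Differentiable ℝ L) (x y : E) (v : E) :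
    D2 L x y v = fderiv ℝ L (x, y) (0, v) := by
  have h : HasFDerivAt (fun z => L (x, z))
      ((fderiv ℝ L ((x : E), y)).comp (ContinuousLinearMap.inr ℝ E E)) y :=
    (hL (x, y)).hasFDerivAt.comp y (HasFDerivAt.prodMk (hasFDerivAt_const x y) (hasFDerivAt_id y))
  rw [D2, h.fderiv]; rfl

theorem fderiv_split (L : E × E → ℝ) (hL : Differentiable ℝ L) (p w : E × E) :
    fderiv ℝ L p w = D1 L p.1 p.2 w.1 + D2 L p.1 p.2 w.2 := by
  rw [D1_eq L hL, D2_eq L hL, ← ContinuousLinearMap.map_add]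
  congr 1
  simp

/-- A second-order map `ξ` is a discrete Lagrangian evolution operator for `L` if and
only if `(ξ*Θ⁻_L) − Θ⁻_L = dL`. -/
theorem discreteEvolutionOperator_iff_pullback_thetaMinus_sub_thetaMinus_eq_dL
    (L : E × E → ℝ) (hL : Differentiable ℝ L)
    (ξ : E × E → E × E) (hξ : Differentiable ℝ ξ)
    (hso : ∀ p : E × E, (ξ p).1 = p.2) :
    (∀ p : E × E, D2 L p.1 p.2 + D1 L (ξ p).1 (ξ p).2 = 0)
      ↔
    (∀ p w : E × E,
      ThetaMinus L (ξ p) (fderiv ℝ ξ p w) - ThetaMinus L p w = fderiv ℝ L p w) := by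
  have hfst : ∀ p w : E × E, (fderiv ℝ ξ p w).1 = w.2 := by
    intro p w
    have h1 : HasFDerivAt (fun q => (ξ q).1)
        ((ContinuousLinearMap.fst ℝ E E).comp (fderiv ℝ ξ p)) p :=
      (ContinuousLinearMap.fst ℝ E E).hasFDerivAt.comp p (hξ p).hasFDerivAt
    have h2 : HasFDerivAt (fun q : E × E => q.2)
        (ContinuousLinearMap.snd ℝ E E) p := hasFDerivAt_snd
    have heq : (fun q => (ξ q).1) = fun q : E × E => q.2 := funext hso
    have := h1.fderiv
    rw [heq, h2.fderiv] at this
    calc (fderiv ℝ ξ p w).1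
        = ((ContinuousLinearMap.fst ℝ E E).comp (fderiv ℝ ξ p)) w := rfl
      _ = (ContinuousLinearMap.snd ℝ E E) w := by rw [← this]
      _ = w.2 := rfl
  constructor
  · intro h p w
    have hd := fderiv_split L hL p w
    have h0 := h p
    have h0' : D1 L (ξ p).1 (ξ p).2 w.2 = -(D2 L p.1 p.2 w.2) := by
      have := congrArg (fun f => f w.2) h0
      simp at this; linarith
    simp only [ThetaMinus, hfst p w, hd, h0']
    ring
  · intro h p
    ext v
    have := h p (0, v)
    simp only [ThetaMinus, hfst p (0, v), fderiv_split L hL] at this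
    simp at this ⊢
    linarith
end

section
/- (Symplecticity of the discrete Lagrangian flow.) Let E be a real normed vector space, L : E × E → ℝ twice Fréchet differentiable, and ξ : E × E → E × E a Fréchet differentiable second-order map that is a discrete Lagrangian evolution operator for L. Then ξ preserves the Poincaré–Cartan 2-form: for every p ∈ E×E and all w₁, w₂ ∈ E×E, ω_L(ξ(p))(Dξ(p)(w₁), Dξ(p)(w₂)) = ω_L(p)(w₁, w₂). -/
variable {E : Type*} [NormedAddCommGroup E] [NormedSpace ℝ E]

/-- The mixed second Fréchet derivative `M(x,y)(u,v) = D²L(x,y)((u,0),(0,v))`. -/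
noncomputable def Mform (L : E × E → ℝ) (p : E × E) (u v : E) : ℝ :=
  fderiv ℝ (fderiv ℝ L) p (u, 0) (0, v)

/-- The discrete Poincaré–Cartan 2-form
`ω_L(x,y)((u₁,v₁),(u₂,v₂)) = M(x,y)(u₂,v₁) − M(x,y)(u₁,v₂)`. -/
noncomputable def omegaL (L : E × E → ℝ) (p : E × E) (w1 w2 : E × E) : ℝ :=
  Mform L p w2.1 w1.2 - Mform L p w1.1 w2.2

/-- Symplecticity of the discrete Lagrangian flow: a discrete Lagrangian evolution
operator preserves the Poincaré–Cartan 2-form `ω_L`. -/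
theorem discreteEvolutionOperator_preserves_omegaL
    (L : E × E → ℝ) (hL : Differentiable ℝ L) (hL2 : Differentiable ℝ (fderiv ℝ L))
    (ξ : E × E → E × E) (hξ : Differentiable ℝ ξ)
    (hso : ∀ p : E × E, (ξ p).1 = p.2)
    (hDEL : ∀ p : E × E, D2 L p.1 p.2 + D1 L (ξ p).1 (ξ p).2 = 0) :
    ∀ (p w1 w2 : E × E),
      omegaL L (ξ p) (fderiv ℝ ξ p w1) (fderiv ℝ ξ p w2) = omegaL L p w1 w2 := by
  intro p w1 w2
  -- D1 in terms of the full derivative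
  have hD1 : ∀ q : E × E, ∀ v : E, D1 L q.1 q.2 v = fderiv ℝ L q (v, 0) := by
    intro q v
    have hinner : HasFDerivAt (fun z : E => ((z, q.2) : E × E))
        ((ContinuousLinearMap.id ℝ E).prod 0) q.1 :=
      (hasFDerivAt_id q.1).prodMk (hasFDerivAt_const q.2 q.1)
    have h2 : HasFDerivAt (fun z : E => L (z, q.2))
        ((fderiv ℝ L q).comp ((ContinuousLinearMap.id ℝ E).prod 0)) q.1 :=
      ((hL q).hasFDerivAt).comp q.1 hinner
    rw [D1, h2.fderiv]
    simp
  have hD2 : ∀ q : E × E, ∀ v : E, D2 L q.1 q.2 v = fderiv ℝ L q (0, v) := by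
    intro q v
    have hinner : HasFDerivAt (fun z : E => ((q.1, z) : E × E))
        ((0 : E →L[ℝ] E).prod (ContinuousLinearMap.id ℝ E)) q.2 :=
      (hasFDerivAt_const q.1 q.2).prodMk (hasFDerivAt_id q.2)
    have h2 : HasFDerivAt (fun z : E => L (q.1, z))
        ((fderiv ℝ L q).comp ((0 : E →L[ℝ] E).prod (ContinuousLinearMap.id ℝ E))) q.2 :=
      ((hL q).hasFDerivAt).comp q.2 hinner
    rw [D2, h2.fderiv]
    simp
  -- pointwise discrete Euler–Lagrange equation
  have hA : ∀ q : E × E, ∀ v : E,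
      fderiv ℝ L q (0, v) + fderiv ℝ L (ξ q) (v, 0) = 0 := by
    intro q v
    have h := ContinuousLinearMap.ext_iff.mp (hDEL q) v
    simpa [ContinuousLinearMap.add_apply, hD1, hD2] using h
  -- symmetry of the second derivative
  have hSym : ∀ q a b : E × E, fderiv ℝ (fderiv ℝ L) q a b = fderiv ℝ (fderiv ℝ L) q b a := by
    intro q a b
    exact second_derivative_symmetric (fun y => (hL y).hasFDerivAt) ((hL2 q).hasFDerivAt) a b
  -- derivative of the second-order condition
  have hC : ∀ w : E × E, (fderiv ℝ ξ p w).1 = w.2 := by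
    intro w
    have h1 : HasFDerivAt (fun r : E × E => (ξ r).1)
        ((ContinuousLinearMap.fst ℝ E E).comp (fderiv ℝ ξ p)) p := ((hξ p).hasFDerivAt).fst
    have h2 : (fun r : E × E => (ξ r).1) = fun r : E × E => r.2 := funext hso
    rw [h2] at h1
    have h3 := h1.unique hasFDerivAt_snd
    have := ContinuousLinearMap.ext_iff.mp h3 w
    simpa using this
  -- derivative of the discrete Euler–Lagrange equation
  have hB : ∀ w : E × E, ∀ v : E,
      fderiv ℝ (fderiv ℝ L) p w (0, v)
        + fderiv ℝ (fderiv ℝ L) (ξ p) (fderiv ℝ ξ p w) (v, 0) = 0 := by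
    intro w v
    have h1 : HasFDerivAt (fun r : E × E => fderiv ℝ L r ((0 : E), v))
        ((ContinuousLinearMap.apply ℝ ℝ ((0 : E), v)).comp (fderiv ℝ (fderiv ℝ L) p)) p :=
      (ContinuousLinearMap.apply ℝ ℝ ((0 : E), v)).hasFDerivAt.comp p (hL2 p).hasFDerivAt
    have h2 : HasFDerivAt (fun r : E × E => fderiv ℝ L (ξ r) (v, (0 : E)))
        ((ContinuousLinearMap.apply ℝ ℝ (v, (0 : E))).comp
          ((fderiv ℝ (fderiv ℝ L) (ξ p)).comp (fderiv ℝ ξ p))) p :=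
      (ContinuousLinearMap.apply ℝ ℝ (v, (0 : E))).hasFDerivAt.comp p
        (((hL2 (ξ p)).hasFDerivAt).comp p (hξ p).hasFDerivAt)
    have h3 := h1.add h2
    have h4 : (fun r : E × E => fderiv ℝ L r ((0 : E), v) + fderiv ℝ L (ξ r) (v, (0 : E)))
        = fun _ => (0 : ℝ) := funext fun r => hA r v
    rw [show ((fun r : E × E => fderiv ℝ L r ((0 : E), v)) + fun r : E × E => fderiv ℝ L (ξ r) (v, (0 : E))) = fun _ => (0 : ℝ) from h4] at h3
    have h5 := h3.unique (hasFDerivAt_const 0 p)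
    have := ContinuousLinearMap.ext_iff.mp h5 w
    simpa using this
  -- splitting a vector into its components
  have hsplit : ∀ q a b : E × E,
      fderiv ℝ (fderiv ℝ L) q a b
        = fderiv ℝ (fderiv ℝ L) q (a.1, 0) b + fderiv ℝ (fderiv ℝ L) q (0, a.2) b := by
    intro q a b
    have h : ((a.1, (0 : E)) + ((0 : E), a.2)) = a := by ext <;> simp
    conv_lhs => rw [← h]
    rw [map_add, ContinuousLinearMap.add_apply]
  -- the two differentiated DEL identities
  have e1 := hB w1 w2.2
  rw [hsplit p w1 (0, w2.2), hsplit (ξ p) (fderiv ℝ ξ p w1) (w2.2, 0), hC w1,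
    hSym (ξ p) (0, (fderiv ℝ ξ p w1).2) (w2.2, 0)] at e1
  have e2 := hB w2 w1.2
  rw [hsplit p w2 (0, w1.2), hsplit (ξ p) (fderiv ℝ ξ p w2) (w1.2, 0), hC w2,
    hSym (ξ p) (0, (fderiv ℝ ξ p w2).2) (w1.2, 0)] at e2
  have s1 := hSym p ((0 : E), w1.2) ((0 : E), w2.2)
  have s2 := hSym (ξ p) (w1.2, (0 : E)) (w2.2, (0 : E))
  simp only [omegaL, Mform, hC w1, hC w2]
  linarith
end

section
/- (Reduction of a left-invariant discrete Lagrangian on a Lie group.) Let A be a complete real normed algebra with unit, ℓ : A → ℝ Fréchet differentiable, and define L on Aˣ × A by L(a, b) = ℓ(a⁻¹ · b). Then for any units g, h, k ∈ Aˣ, the discrete Euler–Lagrange equation D₂L(g,h) + D₁L(h,k) = 0 holds if and only if the reduced (Lie group) discrete Euler–Lagrange equation holds for ℓ at (g⁻¹h, h⁻¹k): for every η ∈ A, Dℓ(g⁻¹h)((g⁻¹h) · η) = Dℓ(h⁻¹k)(η · (h⁻¹k)). -/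
variable {E : Type*} [NormedAddCommGroup E] [NormedSpace ℝ E]

lemma D2_eq_aux {A : Type*} [NormedRing A] [NormedAlgebra ℝ A] [CompleteSpace A]
    (ℓ : A → ℝ) (hℓ : Differentiable ℝ ℓ) (g h : Aˣ) (η : A) :
    D2 (fun p : A × A => ℓ (Ring.inverse p.1 * p.2)) (↑g) (↑h) η
      = fderiv ℝ ℓ (↑g⁻¹ * ↑h) (↑g⁻¹ * η) := by
  have h1 : HasFDerivAt (fun z : A => ℓ (Ring.inverse (↑g : A) * z))
      ((fderiv ℝ ℓ (↑g⁻¹ * ↑h)).comp (ContinuousLinearMap.mul ℝ A (↑g⁻¹ : A))) (↑h : A) := by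
    have h2 : HasFDerivAt (fun z : A => (↑g⁻¹ : A) * z)
        (ContinuousLinearMap.mul ℝ A (↑g⁻¹ : A)) (↑h : A) :=
      (ContinuousLinearMap.mul ℝ A (↑g⁻¹ : A)).hasFDerivAt
    have := ((hℓ (↑g⁻¹ * ↑h)).hasFDerivAt).comp (↑h : A) h2
    rw [Ring.inverse_unit]; exact this
  rw [D2, h1.fderiv]
  rfl

lemma D1_eq_aux {A : Type*} [NormedRing A] [NormedAlgebra ℝ A] [CompleteSpace A]
    (ℓ : A → ℝ) (hℓ : Differentiable ℝ ℓ) (h k : Aˣ) (η : A) :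
    D1 (fun p : A × A => ℓ (Ring.inverse p.1 * p.2)) (↑h) (↑k) η
      = -(fderiv ℝ ℓ (↑h⁻¹ * ↑k) (↑h⁻¹ * η * ↑h⁻¹ * ↑k)) := by
  have hinv : HasFDerivAt (Ring.inverse : A → A)
      (-(ContinuousLinearMap.mulLeftRight ℝ A ↑h⁻¹ ↑h⁻¹)) (↑h : A) :=
    hasFDerivAt_ringInverse h
  have hmul : HasFDerivAt (fun z : A => z * ↑k)
      ((ContinuousLinearMap.mul ℝ A).flip (↑k : A)) (Ring.inverse (↑h : A)) :=
    ((ContinuousLinearMap.mul ℝ A).flip (↑k : A)).hasFDerivAt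
  have hcomp := hmul.comp (↑h : A) hinv
  have hℓ' : HasFDerivAt ℓ (fderiv ℝ ℓ (↑h⁻¹ * ↑k)) (Ring.inverse (↑h : A) * ↑k) := by
    simpa [Ring.inverse_unit] using (hℓ (↑h⁻¹ * ↑k)).hasFDerivAt
  have hfull := hℓ'.comp (↑h : A) hcomp
  have hfull' : HasFDerivAt (fun z : A => ℓ (Ring.inverse z * ↑k))
      ((fderiv ℝ ℓ (↑h⁻¹ * ↑k)).comp
        (((ContinuousLinearMap.mul ℝ A).flip ↑k).comp
          (-(ContinuousLinearMap.mulLeftRight ℝ A ↑h⁻¹ ↑h⁻¹)))) (↑h : A) := hfull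
  rw [D1, hfull'.fderiv]
  simp [ContinuousLinearMap.mulLeftRight_apply, mul_assoc]

/-- Reduction of a left-invariant discrete Lagrangian on a Lie group (the group of units
of a complete normed algebra): the discrete Euler–Lagrange equations for
`L(a,b) = ℓ(a⁻¹b)` hold at `(g,h), (h,k)` if and only if the reduced discrete
Euler–Lagrange (discrete Lie–Poisson-type) equations hold for `ℓ` at `(g⁻¹h, h⁻¹k)`. -/
theorem leftInvariant_DEL_iff_reduced_DEL
    {A : Type*} [NormedRing A] [NormedAlgebra ℝ A] [CompleteSpace A]
    (ℓ : A → ℝ) (hℓ : Differentiable ℝ ℓ) (g h k : Aˣ) :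
    (D2 (fun p : A × A => ℓ (Ring.inverse p.1 * p.2)) (↑g) (↑h)
        + D1 (fun p : A × A => ℓ (Ring.inverse p.1 * p.2)) (↑h) (↑k) = 0)
      ↔
    (∀ η : A,
      fderiv ℝ ℓ ((g⁻¹ * h : Aˣ) : A) (((g⁻¹ * h : Aˣ) : A) * η)
        = fderiv ℝ ℓ ((h⁻¹ * k : Aˣ) : A) (η * ((h⁻¹ * k : Aˣ) : A))) := by
  have key : ∀ η : A,
      (D2 (fun p : A × A => ℓ (Ring.inverse p.1 * p.2)) (↑g) (↑h)
        + D1 (fun p : A × A => ℓ (Ring.inverse p.1 * p.2)) (↑h) (↑k)) η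
      = fderiv ℝ ℓ (↑g⁻¹ * ↑h) (↑g⁻¹ * η) - fderiv ℝ ℓ (↑h⁻¹ * ↑k) (↑h⁻¹ * η * ↑h⁻¹ * ↑k) := by
    intro η
    simp [D2_eq_aux ℓ hℓ g h η, D1_eq_aux ℓ hℓ h k η, sub_eq_add_neg]
  rw [ContinuousLinearMap.ext_iff]
  constructor
  · intro H η
    have := H (↑h * η)
    rw [key] at this
    simp only [ContinuousLinearMap.zero_apply] at this
    have h2 : (↑h⁻¹ : A) * (↑h * η) * ↑h⁻¹ * ↑k = η * (↑h⁻¹ * ↑k) := by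
      rw [← mul_assoc, ← mul_assoc, Units.inv_mul, one_mul, mul_assoc]
    rw [h2, ← mul_assoc] at this
    simpa [Units.val_mul, sub_eq_zero] using this
  · intro H η
    have := H (↑h⁻¹ * η)
    simp only [Units.val_mul] at this
    rw [key]
    have h2 : (↑g⁻¹ : A) * ↑h * (↑h⁻¹ * η) = ↑g⁻¹ * η := by
      rw [mul_assoc, ← mul_assoc (↑h : A), Units.mul_inv, one_mul]
    rw [h2] at this
    simp only [ContinuousLinearMap.zero_apply]
    rw [this]
    simp [mul_assoc]
end

section
/- Let E be a real normed vector space and L : E × E → ℝ twice continuously Fréchet differentiable. Then both discrete Legendre transformations pull back the canonical symplectic form on E × E* to the Poincaré–Cartan 2-form: for every p ∈ E×E and all w₁, w₂ ∈ E×E, ω_can(𝔽⁻L(p))(D(𝔽⁻L)(p)(w₁), D(𝔽⁻L)(p)(w₂)) = ω_L(p)(w₁, w₂), and likewise ω_can(𝔽⁺L(p))(D(𝔽⁺L)(p)(w₁), D(𝔽⁺L)(p)(w₂)) = ω_L(p)(w₁, w₂). -/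
variable {E : Type*} [NormedAddCommGroup E] [NormedSpace ℝ E]

/-- The discrete Legendre transformation `𝔽⁻L(x,y) = (x, −D₁L(x,y))`. -/
noncomputable def FLegMinus (L : E × E → ℝ) : E × E → E × (E →L[ℝ] ℝ) :=
  fun p => (p.1, -(D1 L p.1 p.2))

/-- The discrete Legendre transformation `𝔽⁺L(x,y) = (y, D₂L(x,y))`. -/
noncomputable def FLegPlus (L : E × E → ℝ) : E × E → E × (E →L[ℝ] ℝ) :=
  fun p => (p.2, D2 L p.1 p.2)

/-- The canonical symplectic 2-form `ω_can(q,p)((a₁,b₁),(a₂,b₂)) = b₂(a₁) − b₁(a₂)`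
on `E × E*`. -/
def omegaCan (z w1 w2 : E × (E →L[ℝ] ℝ)) : ℝ := w2.2 w1.1 - w1.2 w2.1

/-- Both discrete Legendre transformations pull back the canonical symplectic form on
`E × E*` to the Poincaré–Cartan 2-form `ω_L`. -/
theorem legendre_pullback_canonical_symplectic
    (L : E × E → ℝ) (hL : ContDiff ℝ 2 L) :
    ∀ (p w1 w2 : E × E),
      omegaCan (FLegMinus L p) (fderiv ℝ (FLegMinus L) p w1) (fderiv ℝ (FLegMinus L) p w2)
          = omegaL L p w1 w2
        ∧
      omegaCan (FLegPlus L p) (fderiv ℝ (FLegPlus L) p w1) (fderiv ℝ (FLegPlus L) p w2)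
          = omegaL L p w1 w2 := by
  intro p w1 w2
  have hLd : Differentiable ℝ L := hL.differentiable two_ne_zero
  have hf : ContDiff ℝ 1 (fderiv ℝ L) := hL.fderiv_right (by norm_num)
  have hfd : DifferentiableAt ℝ (fderiv ℝ L) p := (hf.differentiable one_ne_zero) p
  set s := fderiv ℝ (fderiv ℝ L) p with hs
  have hsymm : ∀ a b : E × E, s a b = s b a :=
    fun a b => (hL.contDiffAt.isSymmSndFDerivAt (by simp [minSmoothness_of_isRCLikeNormedField])).eq a b
  -- D1 and D2 as compositions
  have hD1 : ∀ q : E × E, D1 L q.1 q.2 = (fderiv ℝ L q).comp (.inl ℝ E E) := by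
    intro q
    have h1 : HasFDerivAt (fun z : E => (z, q.2)) (.inl ℝ E E) q.1 :=
      HasFDerivAt.prodMk (hasFDerivAt_id q.1) (hasFDerivAt_const q.2 q.1)
    exact ((hLd (q.1, q.2)).hasFDerivAt.comp q.1 h1).fderiv
  have hD2 : ∀ q : E × E, D2 L q.1 q.2 = (fderiv ℝ L q).comp (.inr ℝ E E) := by
    intro q
    have h1 : HasFDerivAt (fun z : E => (q.1, z)) (.inr ℝ E E) q.2 :=
      HasFDerivAt.prodMk (hasFDerivAt_const q.1 q.2) (hasFDerivAt_id q.2)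
    exact ((hLd (q.1, q.2)).hasFDerivAt.comp q.2 h1).fderiv
  -- the precomposition operators
  set Tl : ((E × E) →L[ℝ] ℝ) →L[ℝ] (E →L[ℝ] ℝ) :=
    (ContinuousLinearMap.compL ℝ E (E × E) ℝ).flip (.inl ℝ E E) with hTl
  set Tr : ((E × E) →L[ℝ] ℝ) →L[ℝ] (E →L[ℝ] ℝ) :=
    (ContinuousLinearMap.compL ℝ E (E × E) ℝ).flip (.inr ℝ E E) with hTr
  -- derivative of FLegMinus
  have hFm : HasFDerivAt (FLegMinus L)
      ((ContinuousLinearMap.fst ℝ E E).prod (-(Tl.comp s))) p := by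
    have heq : FLegMinus L = fun q : E × E => (q.1, -(Tl (fderiv ℝ L q))) := by
      funext q
      simp only [FLegMinus, hD1 q, hTl, ContinuousLinearMap.flip_apply,
        ContinuousLinearMap.compL_apply]
    rw [heq]
    exact HasFDerivAt.prodMk (hasFDerivAt_fst) ((Tl.hasFDerivAt.comp p hfd.hasFDerivAt).neg)
  have hFp : HasFDerivAt (FLegPlus L)
      ((ContinuousLinearMap.snd ℝ E E).prod (Tr.comp s)) p := by
    have heq : FLegPlus L = fun q : E × E => (q.2, Tr (fderiv ℝ L q)) := by
      funext q
      simp only [FLegPlus, hD2 q, hTr, ContinuousLinearMap.flip_apply,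
        ContinuousLinearMap.compL_apply]
    rw [heq]
    exact HasFDerivAt.prodMk (hasFDerivAt_snd) (Tr.hasFDerivAt.comp p hfd.hasFDerivAt)
  rw [hFm.fderiv, hFp.fderiv]
  -- splitting lemma
  have hsplit : ∀ a : E × E, ∀ c : (E × E) →L[ℝ] ℝ, c a = c (a.1, 0) + c (0, a.2) := by
    intro a c
    rw [← map_add]
    simp
  constructor
  · simp only [omegaCan, ContinuousLinearMap.prod_apply, ContinuousLinearMap.neg_apply,
      ContinuousLinearMap.comp_apply, hTl, ContinuousLinearMap.flip_apply,
      ContinuousLinearMap.compL_apply, ContinuousLinearMap.inl_apply, ContinuousLinearMap.coe_fst']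
    have e1 : s w1 (w2.1, 0) = s (w2.1, 0) (w1.1, 0) + Mform L p w2.1 w1.2 := by
      rw [hsymm w1 (w2.1, 0), hsplit w1 (s (w2.1, 0))]; rfl
    have e2 : s w2 (w1.1, 0) = s (w1.1, 0) (w2.1, 0) + Mform L p w1.1 w2.2 := by
      rw [hsymm w2 (w1.1, 0), hsplit w2 (s (w1.1, 0))]; rfl
    rw [e1, e2, hsymm (w2.1, 0) (w1.1, 0)]
    simp [omegaL]
    ring
  · simp only [omegaCan, ContinuousLinearMap.prod_apply,
      ContinuousLinearMap.comp_apply, hTr, ContinuousLinearMap.flip_apply,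
      ContinuousLinearMap.compL_apply, ContinuousLinearMap.inr_apply, ContinuousLinearMap.coe_snd']
    have e1 : s w1 (0, w2.2) = Mform L p w1.1 w2.2 + s (0, w2.2) (0, w1.2) := by
      rw [hsymm w1 (0, w2.2), hsplit w1 (s (0, w2.2))]
      rw [hsymm (0, w2.2) (w1.1, 0)]; rfl
    have e2 : s w2 (0, w1.2) = Mform L p w2.1 w1.2 + s (0, w1.2) (0, w2.2) := by
      rw [hsymm w2 (0, w1.2), hsplit w2 (s (0, w1.2))]
      rw [hsymm (0, w1.2) (w2.1, 0)]; rfl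
    rw [e1, e2, hsymm (0, w2.2) (0, w1.2)]
    simp [omegaL]
end

section
/- (Symplecticity of the discrete Hamiltonian evolution operator.) Let E be a real normed vector space and L : E × E → ℝ twice continuously Fréchet differentiable. Suppose the Legendre transformation 𝔽⁻L : E×E → E × E* is a bijection with Fréchet differentiable inverse. Define the discrete Hamiltonian evolution operator ξ̃ := 𝔽⁺L ∘ (𝔽⁻L)⁻¹ : E × E* → E × E*. Then ξ̃ preserves the canonical symplectic form: for every z ∈ E × E* and all w₁, w₂ ∈ E × E*, ω_can(ξ̃(z))(Dξ̃(z)(w₁), Dξ̃(z)(w₂)) = ω_can(z)(w₁, w₂). -/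
variable {E : Type*} [NormedAddCommGroup E] [NormedSpace ℝ E]

theorem D1_eq_s12 (L : E × E → ℝ) (hL : Differentiable ℝ L) (q : E × E) :
    D1 L q.1 q.2 = (fderiv ℝ L q).comp (ContinuousLinearMap.inl ℝ E E) := by
  have h1 : HasFDerivAt (fun z : E => ((z, q.2) : E × E)) (ContinuousLinearMap.inl ℝ E E) q.1 :=
    (hasFDerivAt_id q.1).prodMk (hasFDerivAt_const q.2 q.1 : HasFDerivAt _ (0 : E →L[ℝ] E) q.1)
  exact ((hL (q.1, q.2)).hasFDerivAt.comp q.1 h1).fderiv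

theorem D2_eq_s12 (L : E × E → ℝ) (hL : Differentiable ℝ L) (q : E × E) :
    D2 L q.1 q.2 = (fderiv ℝ L q).comp (ContinuousLinearMap.inr ℝ E E) := by
  have h1 : HasFDerivAt (fun z : E => ((q.1, z) : E × E)) (ContinuousLinearMap.inr ℝ E E) q.2 :=
    (hasFDerivAt_const q.1 q.2 : HasFDerivAt _ (0 : E →L[ℝ] E) q.2).prodMk (hasFDerivAt_id q.2)
  exact ((hL (q.1, q.2)).hasFDerivAt.comp q.2 h1).fderiv

set_option maxHeartbeats 1000000 in
/-- Symplecticity of the discrete Hamiltonian evolution operator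
`ξ̃ = 𝔽⁺L ∘ (𝔽⁻L)⁻¹`: it preserves the canonical symplectic form on `E × E*`. -/
theorem discreteHamiltonianEvolution_symplectic
    (L : E × E → ℝ) (hL : ContDiff ℝ 2 L)
    (Finv : E × (E →L[ℝ] ℝ) → E × E)
    (hleft : Function.LeftInverse Finv (FLegMinus L))
    (hright : Function.RightInverse Finv (FLegMinus L))
    (hFinv : Differentiable ℝ Finv) :
    ∀ (z w1 w2 : E × (E →L[ℝ] ℝ)),
      omegaCan ((FLegPlus L ∘ Finv) z)
          (fderiv ℝ (FLegPlus L ∘ Finv) z w1) (fderiv ℝ (FLegPlus L ∘ Finv) z w2)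
        = omegaCan z w1 w2 := by
  intro z w1 w2
  have hLdiff : Differentiable ℝ L := hL.differentiable (by norm_num)
  set Φ : E × E → (E × E) →L[ℝ] ℝ := fderiv ℝ L with hΦdef
  have hΦdiff : Differentiable ℝ Φ := (hL.fderiv_right (m := 1) (by norm_num)).differentiable one_ne_zero
  set p : E × E := Finv z with hp
  set B : (E × E) →L[ℝ] (E × E) →L[ℝ] ℝ := fderiv ℝ Φ p with hBdef
  have hB : HasFDerivAt Φ B p := (hΦdiff p).hasFDerivAt
  -- symmetry of the second derivative
  have hsymm : ∀ v w : E × E, B v w = B w v := fun v w =>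
    second_derivative_symmetric (fun y => (hLdiff y).hasFDerivAt) hB v w
  -- precomposition with inl / inr, as continuous linear maps
  set cinl : ((E × E) →L[ℝ] ℝ) →L[ℝ] (E →L[ℝ] ℝ) :=
    (ContinuousLinearMap.compL ℝ E (E × E) ℝ).flip (ContinuousLinearMap.inl ℝ E E) with hcinl
  set cinr : ((E × E) →L[ℝ] ℝ) →L[ℝ] (E →L[ℝ] ℝ) :=
    (ContinuousLinearMap.compL ℝ E (E × E) ℝ).flip (ContinuousLinearMap.inr ℝ E E) with hcinr
  -- derivatives of the Legendre transforms at p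
  have hPlusEq : FLegPlus L = fun q => (q.2, cinr (Φ q)) := by
    funext q
    show (q.2, D2 L q.1 q.2) = _
    rw [D2_eq_s12 L hLdiff q]
    rfl
  have hMinusEq : FLegMinus L = fun q => (q.1, -(cinl (Φ q))) := by
    funext q
    show (q.1, -(D1 L q.1 q.2)) = _
    rw [D1_eq_s12 L hLdiff q]
    rfl
  set Aplus : (E × E) →L[ℝ] E × (E →L[ℝ] ℝ) :=
    (ContinuousLinearMap.snd ℝ E E).prod (cinr.comp B) with hAplus
  set Aminus : (E × E) →L[ℝ] E × (E →L[ℝ] ℝ) :=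
    (ContinuousLinearMap.fst ℝ E E).prod (-(cinl.comp B)) with hAminus
  have hPlus : HasFDerivAt (FLegPlus L) Aplus p := by
    rw [hPlusEq]
    exact hasFDerivAt_snd.prodMk (cinr.hasFDerivAt.comp p hB)
  have hMinus : HasFDerivAt (FLegMinus L) Aminus p := by
    rw [hMinusEq]
    exact hasFDerivAt_fst.prodMk (cinl.hasFDerivAt.comp p hB).neg
  have hD : HasFDerivAt Finv (fderiv ℝ Finv z) z := (hFinv z).hasFDerivAt
  set D : E × (E →L[ℝ] ℝ) →L[ℝ] E × E := fderiv ℝ Finv z with hDdef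
  -- derivative of the evolution operator
  have hcomp : HasFDerivAt (FLegPlus L ∘ Finv) (Aplus.comp D) z := hPlus.comp z hD
  have hfd : fderiv ℝ (FLegPlus L ∘ Finv) z = Aplus.comp D := hcomp.fderiv
  -- FLegMinus ∘ Finv = id gives Aminus ∘ D = id
  have hminuscomp : HasFDerivAt (FLegMinus L ∘ Finv) (Aminus.comp D) z := hMinus.comp z hD
  have hid : FLegMinus L ∘ Finv = id := funext hright
  rw [hid] at hminuscomp
  have hDid : Aminus.comp D = ContinuousLinearMap.id ℝ (E × (E →L[ℝ] ℝ)) :=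
    hminuscomp.unique (hasFDerivAt_id z)
  have hcancel : ∀ w : E × (E →L[ℝ] ℝ), Aminus (D w) = w := fun w => by
    have := congrArg (fun T : (E × (E →L[ℝ] ℝ)) →L[ℝ] (E × (E →L[ℝ] ℝ)) => T w) hDid
    simpa using this
  have h1 := hcancel w1
  have h2 := hcancel w2
  -- components
  have h1a : (D w1).1 = w1.1 := congrArg Prod.fst h1
  have h2a : (D w2).1 = w2.1 := congrArg Prod.fst h2
  have h1b : -(cinl (B (D w1))) = w1.2 := congrArg Prod.snd h1
  have h2b : -(cinl (B (D w2))) = w2.2 := congrArg Prod.snd h2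
  set a1 : E := (D w1).1
  set b1 : E := (D w1).2
  set a2 : E := (D w2).1
  set b2 : E := (D w2).2
  have hDw1 : D w1 = (a1, b1) := rfl
  have hDw2 : D w2 = (a2, b2) := rfl
  -- compute both sides
  have hAplus_app : ∀ v : E × E,
      Aplus v = (v.2, (B v).comp (ContinuousLinearMap.inr ℝ E E)) := fun v => rfl
  have hcinl_app : ∀ g : (E × E) →L[ℝ] ℝ,
      cinl g = g.comp (ContinuousLinearMap.inl ℝ E E) := fun g => rfl
  have E1 : fderiv ℝ (FLegPlus L ∘ Finv) z w1 = ((a1, b1).2,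
      (B (a1, b1)).comp (ContinuousLinearMap.inr ℝ E E)) := by
    rw [hfd, ContinuousLinearMap.comp_apply, ← hDw1, hAplus_app]
  have E2 : fderiv ℝ (FLegPlus L ∘ Finv) z w2 = ((a2, b2).2,
      (B (a2, b2)).comp (ContinuousLinearMap.inr ℝ E E)) := by
    rw [hfd, ContinuousLinearMap.comp_apply, ← hDw2, hAplus_app]
  have hL' : omegaCan ((FLegPlus L ∘ Finv) z)
      (fderiv ℝ (FLegPlus L ∘ Finv) z w1) (fderiv ℝ (FLegPlus L ∘ Finv) z w2)
      = B (a2, b2) (0, b1) - B (a1, b1) (0, b2) := by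
    rw [E1, E2]
    simp only [omegaCan, ContinuousLinearMap.comp_apply, ContinuousLinearMap.inr_apply]
  have hR' : omegaCan z w1 w2 = B (a1, b1) (a2, 0) - B (a2, b2) (a1, 0) := by
    have F1 : w1.2 w2.1 = -(B (a1, b1) (a2, 0)) := by
      rw [← h1b, ← h2a, hcinl_app]
      simp only [ContinuousLinearMap.neg_apply, ContinuousLinearMap.comp_apply,
        ContinuousLinearMap.inl_apply, ← hDw1]
    have F2 : w2.2 w1.1 = -(B (a2, b2) (a1, 0)) := by
      rw [← h2b, ← h1a, hcinl_app]
      simp only [ContinuousLinearMap.neg_apply, ContinuousLinearMap.comp_apply,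
        ContinuousLinearMap.inl_apply, ← hDw2]
    simp only [omegaCan, F1, F2]
    ring
  rw [hL', hR']
  have hadd : ∀ (v : E × E) (a b : E), B v (a, b) = B v (a, 0) + B v (0, b) := fun v a b => by
    rw [← map_add]
    norm_num
  have s1 := hsymm (a1, b1) (0, b2)
  have s2 := hsymm (a2, b2) (0, b1)
  have s3 := hsymm (a1, b1) (a2, 0)
  have s4 := hsymm (a2, b2) (a1, 0)
  have e1 := hadd (0, b1) a2 b2
  have e2 := hadd (0, b2) a1 b1
  have e3 := hadd (a2, 0) a1 b1
  have e4 := hadd (a1, 0) a2 b2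
  have s5 := hsymm (a1, 0) (a2, 0)
  have s6 := hsymm (0, b1) (0, b2)
  have s7 := hsymm (0, b2) (a1, 0)
  have s8 := hsymm (0, b1) (a2, 0)
  linarith
end

section
/- (Discrete Noether's theorem.) Let E be a real normed vector space and L : E × E → ℝ Fréchet differentiable. Suppose (X, f), with X : E → E and f : E → ℝ, is a Noether symmetry of L. Define F : E × E → ℝ by F(x,y) = −D₁L(x,y)(X(x)) − f(x). Then F is a constant of the motion: for any x, y, z ∈ E satisfying the discrete Euler–Lagrange equation D₂L(x,y) + D₁L(y,z) = 0 one has F(y,z) = F(x,y). In particular, if ξ is a discrete Lagrangian evolution operator for L, then F ∘ ξ = F. -/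
/-!
On a solution `(x, y, z)` of the discrete Euler–Lagrange equation, `D₁L(y,z)(X y) = −D₂L(x,y)(X y)`,
and the symmetry identity at `(x, y)` rewrites this as `D₁L(x,y)(X x) + f x − f y`; the two sides
of `F(y,z) = F(x,y)` thus agree. An evolution operator maps `(x, y)` to such a `(y, z)`.
-/

variable {E : Type*} [NormedAddCommGroup E] [NormedSpace ℝ E]

/-- The Noether function `F(x,y) = −D₁L(x,y)(X(x)) − f(x)` associated to a Noether
symmetry `(X, f)` of `L`. -/
noncomputable def noetherFn (L : E × E → ℝ) (X : E → E) (f : E → ℝ) (p : E × E) : ℝ :=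
  -(D1 L p.1 p.2 (X p.1)) - f p.1

def IsNoetherSymmetry (L : E × E → ℝ) (X : E → E) (f : E → ℝ) : Prop :=
  ∀ x y : E, D1 L x y (X x) + D2 L x y (X y) = f y - f x

def IsDiscreteEvolution (L : E × E → ℝ) (ξ : E × E → E × E) : Prop :=
  (∀ p : E × E, (ξ p).1 = p.2) ∧ ∀ p : E × E, D2 L p.1 p.2 + D1 L (ξ p).1 (ξ p).2 = 0

namespace IsNoetherSymmetry

variable {L : E × E → ℝ} {X : E → E} {f : E → ℝ}

theorem noetherFn_eq (hsym : IsNoetherSymmetry L X f) {x y z : E}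
    (hEL : D2 L x y + D1 L y z = 0) : noetherFn L X f (y, z) = noetherFn L X f (x, y) := by
  have hD1 : D1 L y z (X y) = -D2 L x y (X y) :=
    congrArg (· (X y)) (eq_neg_of_add_eq_zero_right hEL)
  calc noetherFn L X f (y, z) = D2 L x y (X y) - f y := by
        rw [noetherFn, hD1, neg_neg]
    _ = noetherFn L X f (x, y) := by
        rw [noetherFn]
        linarith [hsym x y]

theorem noetherFn_comp_eq (hsym : IsNoetherSymmetry L X f) {ξ : E × E → E × E}
    (hξ : IsDiscreteEvolution L ξ) : noetherFn L X f ∘ ξ = noetherFn L X f := by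
  obtain ⟨hfst, hEL⟩ := hξ
  funext p
  calc noetherFn L X f (ξ p) = noetherFn L X f (p.2, (ξ p).2) := by rw [← hfst p]
    _ = noetherFn L X f p := hsym.noetherFn_eq (hfst p ▸ hEL p)

end IsNoetherSymmetry

theorem discrete_noether_general
    (L : E × E → ℝ) (X : E → E) (f : E → ℝ)
    (hNoe : ∀ x y : E, D1 L x y (X x) + D2 L x y (X y) = f y - f x) :
    (∀ x y z : E, D2 L x y + D1 L y z = 0 →
        noetherFn L X f (y, z) = noetherFn L X f (x, y))
      ∧
    (∀ ξ : E × E → E × E, (∀ p : E × E, (ξ p).1 = p.2) →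
      (∀ p : E × E, D2 L p.1 p.2 + D1 L (ξ p).1 (ξ p).2 = 0) →
      noetherFn L X f ∘ ξ = noetherFn L X f) :=
  ⟨fun _ _ _ hEL => IsNoetherSymmetry.noetherFn_eq hNoe hEL,
    fun _ hfst hEL => IsNoetherSymmetry.noetherFn_comp_eq hNoe ⟨hfst, hEL⟩⟩

/-- Discrete Noether's theorem: if `(X, f)` is a Noether symmetry of `L`, then
`F(x,y) = −D₁L(x,y)(X(x)) − f(x)` is a constant of the motion: it is preserved along
solutions of the discrete Euler–Lagrange equations, and `F ∘ ξ = F` for any discrete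
Lagrangian evolution operator `ξ`. -/
theorem discrete_noether
    (L : E × E → ℝ) (hL : Differentiable ℝ L) (X : E → E) (f : E → ℝ)
    (hNoe : ∀ x y : E, D1 L x y (X x) + D2 L x y (X y) = f y - f x) :
    (∀ x y z : E, D2 L x y + D1 L y z = 0 →
        noetherFn L X f (y, z) = noetherFn L X f (x, y))
      ∧
    (∀ ξ : E × E → E × E, (∀ p : E × E, (ξ p).1 = p.2) →
      (∀ p : E × E, D2 L p.1 p.2 + D1 L (ξ p).1 (ξ p).2 = 0) →
      noetherFn L X f ∘ ξ = noetherFn L X f) :=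
  discrete_noether_general L X f hNoe
end

section
/- (Noether symmetries form a Lie subalgebra.) Let E be a real normed vector space, L : E × E → ℝ twice Fréchet differentiable, and let (X, f) and (Y, g) be Noether symmetries of L with X, Y : E → E and f, g : E → ℝ Fréchet differentiable. Define the Lie bracket [X,Y](x) := DY(x)(X(x)) − DX(x)(Y(x)) and the function h(x) := Dg(x)(X(x)) − Df(x)(Y(x)). Then ([X,Y], h) is again a Noether symmetry of L, i.e. D₁L(x,y)([X,Y](x)) + D₂L(x,y)([X,Y](y)) = h(y) − h(x) for all (x,y) ∈ E×E. -/
variable {E : Type*} [NormedAddCommGroup E] [NormedSpace ℝ E]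

lemma fderiv_split_s16 (L : E × E → ℝ) (hL : Differentiable ℝ L) (x y u v : E) :
    fderiv ℝ L (x, y) (u, v) = D1 L x y u + D2 L x y v := by
  have h1 : HasFDerivAt (fun z => L (z, y))
      ((fderiv ℝ L (x, y)).comp ((ContinuousLinearMap.id ℝ E).prod 0)) x :=
    (hL (x, y)).hasFDerivAt.comp x (HasFDerivAt.prodMk (hasFDerivAt_id x) (hasFDerivAt_const y x))
  have h2 : HasFDerivAt (fun z => L (x, z))
      ((fderiv ℝ L (x, y)).comp ((0 : E →L[ℝ] E).prod (ContinuousLinearMap.id ℝ E))) y :=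
    (hL (x, y)).hasFDerivAt.comp y (HasFDerivAt.prodMk (hasFDerivAt_const x y) (hasFDerivAt_id y))
  have e1 : D1 L x y u = fderiv ℝ L (x, y) (u, 0) := by
    rw [D1, h1.fderiv]; rfl
  have e2 : D2 L x y v = fderiv ℝ L (x, y) (0, v) := by
    rw [D2, h2.fderiv]; rfl
  rw [e1, e2, ← map_add]
  norm_num

lemma keyB (L : E × E → ℝ) (hL : Differentiable ℝ L) (hL2 : Differentiable ℝ (fderiv ℝ L))
    (Y : E → E) (g : E → ℝ) (hY : Differentiable ℝ Y) (hg : Differentiable ℝ g)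
    (hN : ∀ p : E × E, fderiv ℝ L p (Y p.1, Y p.2) = g p.2 - g p.1)
    (p w : E × E) :
    fderiv ℝ (fderiv ℝ L) p w (Y p.1, Y p.2)
      + fderiv ℝ L p (fderiv ℝ Y p.1 w.1, fderiv ℝ Y p.2 w.2)
      + (fderiv ℝ g p.1 w.1 - fderiv ℝ g p.2 w.2) = 0 := by
  have hYmap : HasFDerivAt (fun q : E × E => (Y q.1, Y q.2))
      (((fderiv ℝ Y p.1).comp (ContinuousLinearMap.fst ℝ E E)).prod
        ((fderiv ℝ Y p.2).comp (ContinuousLinearMap.snd ℝ E E))) p :=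
    (HasFDerivAt.prodMk ((hY p.1).hasFDerivAt.comp p (hasFDerivAt_fst))
      ((hY p.2).hasFDerivAt.comp p (hasFDerivAt_snd)))
  have happ := (hL2 p).hasFDerivAt.clm_apply hYmap
  have hgpart : HasFDerivAt (fun q : E × E => g q.1 - g q.2)
      (((fderiv ℝ g p.1).comp (ContinuousLinearMap.fst ℝ E E)) -
        ((fderiv ℝ g p.2).comp (ContinuousLinearMap.snd ℝ E E))) p :=
    (((hg p.1).hasFDerivAt.comp p (hasFDerivAt_fst)).sub
      ((hg p.2).hasFDerivAt.comp p (hasFDerivAt_snd)))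
  have hT := happ.fun_add hgpart
  have hΦ0 : (fun q : E × E => fderiv ℝ L q (Y q.1, Y q.2) + (g q.1 - g q.2))
      = fun _ => (0 : ℝ) := by
    funext q
    have := hN q
    simp only [this]
    ring
  rw [hΦ0] at hT
  have hz := hT.unique (hasFDerivAt_const 0 p)
  have := congrArg (fun (T : (E × E) →L[ℝ] ℝ) => T w) hz
  simp only [ContinuousLinearMap.add_apply, ContinuousLinearMap.sub_apply,
    ContinuousLinearMap.comp_apply, ContinuousLinearMap.coe_fst', ContinuousLinearMap.coe_snd',
    ContinuousLinearMap.flip_apply, ContinuousLinearMap.prod_apply,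
    ContinuousLinearMap.zero_apply] at this
  linarith [this]

/-- Noether symmetries of a discrete Lagrangian form a Lie subalgebra: the bracket
`[X,Y](x) = DY(x)(X(x)) − DX(x)(Y(x))` together with the function
`h(x) = Dg(x)(X(x)) − Df(x)(Y(x))` is again a Noether symmetry of `L`. -/
theorem noether_symmetries_closed_under_bracket
    (L : E × E → ℝ) (hL : Differentiable ℝ L) (hL2 : Differentiable ℝ (fderiv ℝ L))
    (X Y : E → E) (f g : E → ℝ)
    (hX : Differentiable ℝ X) (hY : Differentiable ℝ Y)
    (hf : Differentiable ℝ f) (hg : Differentiable ℝ g)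
    (hNX : ∀ x y : E, D1 L x y (X x) + D2 L x y (X y) = f y - f x)
    (hNY : ∀ x y : E, D1 L x y (Y x) + D2 L x y (Y y) = g y - g x) :
    ∀ x y : E,
      D1 L x y (fderiv ℝ Y x (X x) - fderiv ℝ X x (Y x))
          + D2 L x y (fderiv ℝ Y y (X y) - fderiv ℝ X y (Y y))
        = (fderiv ℝ g y (X y) - fderiv ℝ f y (Y y))
          - (fderiv ℝ g x (X x) - fderiv ℝ f x (Y x)) := by
  intro x y
  have hNY' : ∀ p : E × E, fderiv ℝ L p (Y p.1, Y p.2) = g p.2 - g p.1 := by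
    intro p
    rw [show p = (p.1, p.2) from rfl, fderiv_split_s16 L hL]
    exact hNY p.1 p.2
  have hNX' : ∀ p : E × E, fderiv ℝ L p (X p.1, X p.2) = f p.2 - f p.1 := by
    intro p
    rw [show p = (p.1, p.2) from rfl, fderiv_split_s16 L hL]
    exact hNX p.1 p.2
  have hB := keyB L hL hL2 Y g hY hg hNY' (x, y) (X x, X y)
  have hB' := keyB L hL hL2 X f hX hf hNX' (x, y) (Y x, Y y)
  have hsymm : fderiv ℝ (fderiv ℝ L) (x, y) (X x, X y) (Y x, Y y)
      = fderiv ℝ (fderiv ℝ L) (x, y) (Y x, Y y) (X x, X y) :=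
    second_derivative_symmetric (fun q => (hL q).hasFDerivAt)
      ((hL2 (x, y)).hasFDerivAt) _ _
  simp only at hB hB'
  have key : fderiv ℝ L (x, y) (fderiv ℝ Y x (X x), fderiv ℝ Y y (X y))
      - fderiv ℝ L (x, y) (fderiv ℝ X x (Y x), fderiv ℝ X y (Y y))
      = (fderiv ℝ g y (X y) - fderiv ℝ f y (Y y))
        - (fderiv ℝ g x (X x) - fderiv ℝ f x (Y x)) := by
    linarith [hB, hB', hsymm]
  rw [← key, ← map_sub, Prod.mk_sub_mk]
  exact (fderiv_split_s16 L hL x y _ _).symm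
end

section
/- (Conservation of angular momentum along Γ for the discrete heavy top.) Let m, g, l, h ∈ ℝ and e ∈ ℝ³ be constants, and let Γ, Π : ℕ → ℝ³ and W : ℕ → Matrix (Fin 3) (Fin 3) ℝ be sequences such that each W_k is orthogonal (W_kᵀ * W_k = 1). Suppose the discrete heavy top equations hold for every k: Γ_{k+1} = W_kᵀ ·ᵥ Γ_k and Π_{k+1} = W_kᵀ ·ᵥ Π_k + (m·g·l·h²) • (Γ_{k+1} × e), where × is the cross product on ℝ³ and ·ᵥ is matrix–vector multiplication. Then the quantity Π_k ⬝ Γ_k (Euclidean dot product) is constant in k: Π_k ⬝ Γ_k = Π₀ ⬝ Γ₀ for all k. -/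
/-!
Each step rotates `Π` and `Γ` by the same orthogonal matrix `W_kᵀ`, which preserves their dot
product, and adds to `Π` a multiple of `Γ_{k+1} × e`, which is orthogonal to `Γ_{k+1}`.
-/

open Matrix

theorem Matrix.transpose_mulVec_dotProduct_transpose_mulVec {R n : Type*} [CommRing R]
    [Fintype n] [DecidableEq n] {W : Matrix n n R}
    (hW : Wᵀ * W = 1) (x y : n → R) :
    Wᵀ *ᵥ x ⬝ᵥ Wᵀ *ᵥ y = x ⬝ᵥ y := by
  rw [mulVec_transpose, dotProduct_mulVec, vecMul_vecMul, mul_eq_one_comm.mp hW, vecMul_one]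

theorem heavy_top_step_dotProduct_eq {R : Type*} [CommRing R] {W : Matrix (Fin 3) (Fin 3) R}
    (hW : Wᵀ * W = 1) (c : R) (e Γ P : Fin 3 → R) :
    (Wᵀ *ᵥ P + c • crossProduct (Wᵀ *ᵥ Γ) e) ⬝ᵥ Wᵀ *ᵥ Γ = P ⬝ᵥ Γ := by
  rw [add_dotProduct, smul_dotProduct, dotProduct_comm (crossProduct _ _), dot_self_cross,
    smul_zero, add_zero, transpose_mulVec_dotProduct_transpose_mulVec hW]

/-- Conservation of the angular momentum along `Γ` for the discrete heavy top:
if `Γ_{k+1} = W_kᵀ Γ_k` and `Pi_{k+1} = W_kᵀ Pi_k + m g l h² (Γ_{k+1} × e)` with each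
`W_k` orthogonal, then `Pi_k ⬝ Γ_k` is constant in `k`.
(Here `Pmom` plays the role of the momentum `Π` of the paper.) -/
theorem discrete_heavy_top_momentum_conservation
    (m g l h : ℝ) (e : Fin 3 → ℝ)
    (Γ Pmom : ℕ → Fin 3 → ℝ) (W : ℕ → Matrix (Fin 3) (Fin 3) ℝ)
    (horth : ∀ k : ℕ, (W k)ᵀ * W k = 1)
    (hΓ : ∀ k : ℕ, Γ (k + 1) = (W k)ᵀ.mulVec (Γ k))
    (hP : ∀ k : ℕ, Pmom (k + 1)
        = (W k)ᵀ.mulVec (Pmom k) + (m * g * l * h ^ 2) • (crossProduct (Γ (k + 1)) e)) :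
    ∀ k : ℕ, Pmom k ⬝ᵥ Γ k = Pmom 0 ⬝ᵥ Γ 0 := by
  intro k
  induction k with
  | zero => rfl
  | succ k ih =>
    rw [hP k, hΓ k, heavy_top_step_dotProduct_eq (horth k), ih]
end
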